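/- arXiv:2411.13483 — 4 statements merged into one kernel-verified Lean document; each statement's English description precedes it below -/
import Mathlib

section
/- Let k be a positive integer and let S be an antidirected tree with at most k arcs whose underlying tree has diameter at most 4. Let D be a digraph with minimum pseudo-semidegree δ̄⁰(D) ≥ k/2 such that every orientation of the 4-cycle occurring as a subdigraph of D is a directed 4-cycle, and suppose Δ±(D) > Δ^tot(S). Then D contains S as a subdigraph. -/
open Finset

/-- The out-degree of a vertex in a digraph given by its arc relation `A`. -/
def outDeg {V : Type*} [Fintype V] (A : V → V → Prop) [DecidableRel A] (v : V) : ℕ :=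
  (Finset.univ.filter fun w => A v w).card

/-- The in-degree of a vertex in a digraph given by its arc relation `A`. -/
def inDeg {V : Type*} [Fintype V] (A : V → V → Prop) [DecidableRel A] (v : V) : ℕ :=
  (Finset.univ.filter fun w => A w v).card

/-- The number of arcs of a digraph. -/
def numArcs {V : Type*} [Fintype V] (A : V → V → Prop) [DecidableRel A] : ℕ :=
  (Finset.univ.filter fun p : V × V => A p.1 p.2).card

/-- The underlying simple graph of a digraph. -/
def underlying {V : Type*} (A : V → V → Prop) : SimpleGraph V where
  Adj x y := x ≠ y ∧ (A x y ∨ A y x)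
  symm := ⟨fun x y h => ⟨h.1.symm, h.2.symm⟩⟩
  loopless := ⟨fun x h => h.1 rfl⟩

/-- The total degree of a vertex: its degree in the underlying undirected graph. -/
def totDeg {V : Type*} [Fintype V] [DecidableEq V] (A : V → V → Prop) [DecidableRel A]
    (v : V) : ℕ :=
  (Finset.univ.filter fun w => w ≠ v ∧ (A v w ∨ A w v)).card

/-- `A` is an oriented tree: an orientation of a (finite) tree. In particular there
is at most one arc between any two vertices, and the underlying graph is a tree. -/
def IsOrientedTree {V : Type*} (A : V → V → Prop) : Prop :=
  (∀ x y, ¬ (A x y ∧ A y x)) ∧ (underlying A).IsTree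

/-- A digraph is antidirected if every vertex has in-degree 0 or out-degree 0. -/
def IsAntidirected {V : Type*} (A : V → V → Prop) : Prop :=
  ∀ v, (∀ u, ¬ A u v) ∨ (∀ u, ¬ A v u)

/-- `D` (with arc relation `AD`) contains `T` (with arc relation `AT`) as a
subdigraph: there is an injective map of vertices sending arcs to arcs. -/
def Contains {VT VD : Type*} (AT : VT → VT → Prop) (AD : VD → VD → Prop) : Prop :=
  ∃ f : VT → VD, Function.Injective f ∧ ∀ x y, AT x y → AD (f x) (f y)

/-- No orientation of the 4-cycle occurs as a subdigraph. -/
def C4Free {V : Type*} (A : V → V → Prop) : Prop :=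
  ∀ a b c d : V, a ≠ b → a ≠ c → a ≠ d → b ≠ c → b ≠ d → c ≠ d →
    ¬ ((A a b ∨ A b a) ∧ (A b c ∨ A c b) ∧ (A c d ∨ A d c) ∧ (A d a ∨ A a d))

/-- An arc between `x` and `y` in the direction given by `e`. -/
def dirArc {V : Type*} (A : V → V → Prop) (x y : V) : Bool → Prop
  | true => A x y
  | false => A y x

/-- Every orientation of the 4-cycle occurring as a subdigraph is a directed
4-cycle (i.e. all four arcs are oriented the same way around the cycle). -/
def C4StarFree {V : Type*} (A : V → V → Prop) : Prop :=
  ∀ a b c d : V, a ≠ b → a ≠ c → a ≠ d → b ≠ c → b ≠ d → c ≠ d →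
    ∀ e1 e2 e3 e4 : Bool,
      dirArc A a b e1 → dirArc A b c e2 → dirArc A c d e3 → dirArc A d a e4 →
      e1 = e2 ∧ e2 = e3 ∧ e3 = e4

/-- `A` is an out-arborescence with root `r`: an oriented tree all of whose arcs
point away from the root. -/
def IsOutArborescence {V : Type*} (A : V → V → Prop) (r : V) : Prop :=
  IsOrientedTree A ∧
    ∀ x y, A x y → (underlying A).dist r y = (underlying A).dist r x + 1

/-!
The underlying tree of `S` has diameter at most 4, so it has a centre `c` at distance at most 2
from every vertex; reversing all arcs of `S` and `D` if necessary, `c` is a source. As `S` is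
antidirected, its arcs are the arcs `c → x` to the children `x` of `c`, which are sinks, and one
arc `y → x` from every other vertex `y`, a leaf at `x`.

We send `c` to a vertex `a`, the children injectively to out-neighbours of `a`, and the leaves at
`x` injectively to in-neighbours of the image of `x` avoiding `a` and the images of the children.
Since every 4-cycle of `D` is directed, two out-neighbours of `a` have no common in-neighbour
besides `a`, so leaves at different children never collide, and an out-neighbour of `a` is
adjacent to at most one other out-neighbour of `a`. So the image of `x` keeps all but two of its
at least `d = ⌈k/2⌉` in-neighbours, and all but one if none of them is the image of a child.
With `m x` leaves at `x`, `|X| + ∑ m x ≤ k ≤ 2d`. If some child has `m x ≥ d`, it goes to a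
vertex `b` of in-degree `> Δᵗᵒᵗ(S)` and `a` is an in-neighbour of `b`. Otherwise at most two
children have `m x = d - 1`; they go to out-neighbours of a vertex of out-degree `> Δᵗᵒᵗ(S)`
chosen so that no image of a child is an in-neighbour of theirs.
-/

lemma Finset.exists_injOn_mapsTo_of_card_le {α β : Type*} [Nonempty β] {s : Finset α}
    {t : Finset β} (h : #s ≤ #t) : ∃ f : α → β, Set.InjOn f s ∧ Set.MapsTo f s t := by
  obtain ⟨f, hmaps, hinj⟩ := s.finite_toSet.exists_injOn_of_encard_le (t := (t : Set β))
    (by simpa [Set.encard_coe_eq_coe_finsetCard] using h)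
  exact ⟨f, hinj, hmaps⟩

lemma Finset.exists_injOn_of_card_erase_le {α β : Type*} [DecidableEq α] [Nonempty β]
    {s : Finset α} {t : Finset β} {x₀ : α} {y₀ : β} (hx₀ : x₀ ∈ s) (hy₀ : y₀ ∉ t)
    (h : #(s.erase x₀) ≤ #t) :
    ∃ f : α → β, Set.InjOn f s ∧ f x₀ = y₀ ∧ Set.MapsTo f (s.erase x₀) t := by
  obtain ⟨f, hinj, hmaps⟩ := exists_injOn_mapsTo_of_card_le h
  have hupd : Set.EqOn (Function.update f x₀ y₀) f (s.erase x₀) := fun x hx =>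
    Function.update_of_ne (ne_of_mem_erase hx) _ _
  refine ⟨Function.update f x₀ y₀, ?_, by simp, (hmaps.congr hupd.symm)⟩
  rw [← insert_erase hx₀, coe_insert, Set.injOn_insert (by simp)]
  refine ⟨hinj.congr hupd.symm, ?_⟩
  rintro ⟨x, hx, hfx⟩
  rw [hupd hx, Function.update_self] at hfx
  exact hy₀ (hfx ▸ hmaps hx)

namespace SimpleGraph

variable {V : Type*} {G : SimpleGraph V}

lemma IsAcyclic.length_eq_dist (hG : G.IsAcyclic) {u v : V} {p : G.Walk u v} (hp : p.IsPath) :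
    p.length = G.dist u v := by
  obtain ⟨q, hq, hlen⟩ := p.reachable.exists_path_of_dist
  have : (⟨p, hp⟩ : G.Path u v) = ⟨q, hq⟩ := (hG.subsingleton_path u v).elim _ _
  rw [← hlen, Subtype.mk.inj this]

lemma IsAcyclic.isPath_reverse_append (hG : G.IsAcyclic) {m x y : V} {P : G.Walk m x}
    {Q : G.Walk m y} (hP : P.IsPath) (hQ : Q.IsPath) (hPQ : P.snd ≠ Q.snd) :
    (P.reverse.append Q).IsPath := by
  classical
  have hcommon : ∀ z ∈ P.support, z ∈ Q.support → z = m := by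
    intro z hzP hzQ
    by_contra hzm
    have : (⟨_, hP.takeUntil hzP⟩ : G.Path m z) = ⟨_, hQ.takeUntil hzQ⟩ :=
      (hG.subsingleton_path m z).elim _ _
    apply hPQ
    rw [← Walk.snd_takeUntil hzm P hzP, ← Walk.snd_takeUntil hzm Q hzQ, Subtype.mk.inj this]
  rw [Walk.isPath_def, Walk.support_append, List.nodup_append]
  refine ⟨hP.reverse.support_nodup, hQ.support_nodup.tail, ?_⟩
  rintro z hzP _ hzQ rfl
  rw [Walk.support_reverse, List.mem_reverse] at hzP
  obtain rfl := hcommon z hzP (List.mem_of_mem_tail hzQ)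
  have hnd := hQ.support_nodup
  rw [← Q.cons_tail_support] at hnd
  exact (List.nodup_cons.mp hnd).1 hzQ

lemma IsAcyclic.dist_eq_length_add_length (hG : G.IsAcyclic) {m x y : V} {P : G.Walk m x}
    {Q : G.Walk m y} (hP : P.IsPath) (hQ : Q.IsPath) (hPQ : P.snd ≠ Q.snd) :
    G.dist x y = P.length + Q.length := by
  rw [← hG.length_eq_dist (hG.isPath_reverse_append hP hQ hPQ), Walk.length_append,
    Walk.length_reverse]

lemma IsAcyclic.commonNeighbors_subsingleton (hG : G.IsAcyclic) {u v : V} (huv : u ≠ v) :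
    (G.commonNeighbors u v).Subsingleton := by
  have path : ∀ w (huw : G.Adj u w) (hwv : G.Adj w v),
      (Walk.cons huw (Walk.cons hwv .nil)).IsPath := fun w huw hwv => by
    simp [Walk.cons_isPath_iff, huv, huw.ne, hwv.ne]
  rintro z ⟨huz, hzv⟩ z' ⟨huz', hz'v⟩
  have := (hG.subsingleton_path u v).elim ⟨_, path z huz hzv.symm⟩ ⟨_, path z' huz' hz'v.symm⟩
  exact congrArg (fun p : G.Path u v => p.1.snd) this

lemma IsTree.exists_forall_dist_le [Fintype V] (hG : G.IsTree) {n : ℕ}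
    (hdiam : ∀ x y, G.dist x y ≤ 2 * n) : ∃ c, ∀ w, G.dist c w ≤ n := by
  classical
  have : Nonempty V := hG.connected.nonempty
  let ecc : V → ℕ := fun c => univ.sup (G.dist c)
  have hecc : ∀ c w, G.dist c w ≤ ecc c := fun c w => le_sup (mem_univ w)
  obtain ⟨c, -, hmin⟩ := univ.exists_min_image ecc univ_nonempty
  refine ⟨c, fun w => ?_⟩
  by_contra! hw
  obtain ⟨P, hP, hPlen⟩ := hG.connected.exists_path_of_dist c w
  have hPnil : ¬ P.Nil := Walk.not_nil_iff_lt_length.mpr (by omega)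
  have hcP : G.dist P.snd c = 1 := dist_eq_one_iff_adj.mpr (P.adj_snd hPnil).symm
  -- The neighbour of `c` towards `w` has smaller eccentricity than `c`.
  have hstep : ∀ z, G.dist P.snd z + 1 ≤ ecc c := by
    intro z
    obtain ⟨Q, hQ, hQlen⟩ := hG.connected.exists_path_of_dist c z
    by_cases hQP : Q.snd = P.snd
    · have hQnil : ¬ Q.Nil := fun h => (P.adj_snd hPnil).ne <| by
        rw [← hQP, Walk.snd, Q.getVert_of_length_le (by simp [Walk.length_eq_zero_iff.mpr h]), h.eq]
      have hQtail : G.dist Q.snd z + 1 ≤ Q.length :=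
        (Nat.add_le_add_right (dist_le Q.tail) 1).trans_eq (Q.length_tail_add_one hQnil)
      rw [hQP] at hQtail
      have := hecc c z
      omega
    · have := hG.isAcyclic.dist_eq_length_add_length hP hQ (Ne.symm hQP)
      have := hdiam w z
      have := hecc c w
      have : G.dist P.snd z ≤ G.dist P.snd c + G.dist c z := hG.connected.dist_triangle
      omega
  have := hmin P.snd (mem_univ _)
  have := hecc c w
  have : ecc P.snd ≤ ecc c - 1 := Finset.sup_le fun z _ => by have := hstep z; omega
  omega

end SimpleGraph

section Digraph

variable {V : Type*} [Fintype V]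

def outNbrs (A : V → V → Prop) [DecidableRel A] (v : V) : Finset V := univ.filter (A v ·)

def inNbrs (A : V → V → Prop) [DecidableRel A] (v : V) : Finset V := univ.filter (A · v)

variable {A : V → V → Prop} [DecidableRel A]

@[simp] lemma mem_outNbrs {v w : V} : w ∈ outNbrs A v ↔ A v w := by simp [outNbrs]

@[simp] lemma mem_inNbrs {v w : V} : w ∈ inNbrs A v ↔ A w v := by simp [inNbrs]

lemma card_outNbrs (v : V) : #(outNbrs A v) = outDeg A v := rfl

lemma numArcs_eq_sum_inDeg : numArcs A = ∑ v, inDeg A v := by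
  simp only [numArcs, inDeg, card_filter, Fintype.sum_prod_type]
  exact sum_comm

lemma totDeg_eq_inDeg [DecidableEq V] {v : V} (hv : ∀ w, ¬ A v w) : totDeg A v = inDeg A v := by
  unfold totDeg inDeg
  congr 1
  ext w
  simp only [mem_filter, mem_univ, true_and, hv, false_or, and_iff_right_iff_imp]
  rintro h rfl
  exact hv w h

lemma totDeg_eq_outDeg [DecidableEq V] {v : V} (hv : ∀ w, ¬ A w v) : totDeg A v = outDeg A v := by
  unfold totDeg outDeg
  congr 1
  ext w
  simp only [mem_filter, mem_univ, true_and, hv, or_false, and_iff_right_iff_imp]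
  rintro h rfl
  exact hv w h

instance : DecidableRel (flip A) := fun x y => inferInstanceAs (Decidable (A y x))

lemma numArcs_flip : numArcs (flip A) = numArcs A :=
  card_equiv (Equiv.prodComm V V) fun _ => by simp only [mem_filter, mem_univ, true_and]; rfl

lemma totDeg_flip [DecidableEq V] (v : V) : totDeg (flip A) v = totDeg A v := by
  simp only [totDeg, flip, or_comm]

end Digraph

section Arcs

variable {V : Type*} {A : V → V → Prop}

lemma underlying_flip : underlying (flip A) = underlying A := by
  ext
  simp [underlying, flip, or_comm]

lemma IsOrientedTree.flip (h : IsOrientedTree A) : IsOrientedTree (flip A) :=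
  ⟨fun x y hxy => h.1 y x hxy, underlying_flip ▸ h.2⟩

lemma IsAntidirected.flip (h : IsAntidirected A) : IsAntidirected (flip A) :=
  fun v => (h v).symm

lemma ne_of_arc (hloop : ∀ v, ¬ A v v) {x y : V} (h : A x y) : x ≠ y :=
  fun hxy => hloop y (hxy ▸ h)

lemma exists_dirArc_of_or {x y : V} (h : A x y ∨ A y x) : ∃ e, dirArc A x y e :=
  h.elim (⟨true, ·⟩) (⟨false, ·⟩)

lemma C4StarFree.eq_of_common_inNbr (hC4 : C4StarFree A) (hloop : ∀ v, ¬ A v v)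
    {a u u' z : V} (hau : A a u) (hau' : A a u') (huu' : u ≠ u') (hzu : A z u) (hzu' : A z u') :
    z = a := by
  by_contra hza
  have := hC4 a u z u' (ne_of_arc hloop hau) (Ne.symm hza) (ne_of_arc hloop hau')
    (ne_of_arc hloop hzu).symm huu' (ne_of_arc hloop hzu') true false true false hau hzu hzu' hau'
  simp at this

lemma dirArc_flip (x y : V) : ∀ e, dirArc (flip A) x y e ↔ dirArc A x y (!e)
  | true => Iff.rfl
  | false => Iff.rfl

lemma C4StarFree.flip (h : C4StarFree A) : C4StarFree (flip A) := by
  intro a b c d hab hac had hbc hbd hcd e₁ e₂ e₃ e₄ h₁ h₂ h₃ h₄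
  simpa using h a b c d hab hac had hbc hbd hcd (!e₁) (!e₂) (!e₃) (!e₄)
    ((dirArc_flip _ _ _).mp h₁) ((dirArc_flip _ _ _).mp h₂) ((dirArc_flip _ _ _).mp h₃)
    ((dirArc_flip _ _ _).mp h₄)

lemma Contains.of_flip {W : Type*} {B : W → W → Prop} (h : Contains (flip B) (flip A)) :
    Contains B A :=
  let ⟨f, hf, harc⟩ := h
  ⟨f, hf, fun x y hxy => harc y x hxy⟩

end Arcs

section Host

variable {V ι : Type*} [Fintype V] {A : V → V → Prop} [DecidableRel A]

lemma C4StarFree.card_filter_outNbrs_le_one (hC4 : C4StarFree A) (hloop : ∀ v, ¬ A v v)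
    {a u : V} (hau : A a u) : #((outNbrs A a).filter fun v => A v u ∨ A u v) ≤ 1 := by
  refine card_le_one.mpr fun v hv w hw => by_contra fun hvw => ?_
  simp only [mem_filter, mem_outNbrs] at hv hw
  have hvu : v ≠ u := fun h => by simp [h, hloop] at hv
  have hwu : w ≠ u := fun h => by simp [h, hloop] at hw
  obtain ⟨e₂, h₂⟩ := exists_dirArc_of_or hv.2
  obtain ⟨e₃, h₃⟩ := exists_dirArc_of_or hw.2.symm
  obtain ⟨rfl, rfl, h⟩ := hC4 a v u w (ne_of_arc hloop hv.1) (ne_of_arc hloop hau)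
    (ne_of_arc hloop hw.1) hvu hvw hwu.symm true e₂ e₃ false hv.1 h₂ h₃ hw.1
  cases h

variable [DecidableEq V]

lemma inDeg_le_card_sdiff_insert (a u : V) (T : Finset V) :
    inDeg A u ≤ #(inNbrs A u \ insert a T) + 1 + #(T.filter (A · u)) := by
  have : inNbrs A u ⊆ (inNbrs A u \ insert a T) ∪ insert a (T.filter (A · u)) := by
    intro v hv
    rw [mem_inNbrs] at hv
    simp only [mem_union, mem_sdiff, mem_insert, mem_filter, mem_inNbrs]
    tauto
  calc inDeg A u ≤ _ := card_le_card this
    _ ≤ _ := card_union_le _ _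
    _ ≤ _ := by grw [card_insert_le]; omega

variable (A) in
/-- `g` places the children `X` of a centre on out-neighbours of `a`, so that each `g x` keeps
`m x` in-neighbours outside `a` and `g '' X`, one for each leaf at `x`. -/
def IsOutStarWithRoom (a : V) (g : ι → V) (X : Finset ι) (m : ι → ℕ) : Prop :=
  Set.InjOn g X ∧ ∀ x ∈ X, A a (g x) ∧ m x ≤ #(inNbrs A (g x) \ insert a (X.image g))

lemma isOutStarWithRoom_of_le {a : V} {g : ι → V} {X : Finset ι} {m : ι → ℕ}
    (hg : Set.InjOn g X) (hga : ∀ x ∈ X, A a (g x))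
    (hm : ∀ x ∈ X, m x + 1 + #((X.image g).filter (A · (g x))) ≤ inDeg A (g x)) :
    IsOutStarWithRoom A a g X m :=
  ⟨hg, fun x hx => ⟨hga x hx, by
    have := inDeg_le_card_sdiff_insert (A := A) a (g x) (X.image g)
    have := hm x hx
    omega⟩⟩

lemma C4StarFree.card_filter_image_le_one (hC4 : C4StarFree A) (hloop : ∀ v, ¬ A v v)
    {a : V} {g : ι → V} {X : Finset ι} (hga : ∀ x ∈ X, A a (g x)) {x : ι} (hx : x ∈ X) :
    #((X.image g).filter (A · (g x))) ≤ 1 := by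
  refine (card_le_card fun v hv => ?_).trans (hC4.card_filter_outNbrs_le_one hloop (hga x hx))
  simp only [mem_filter, mem_image] at hv ⊢
  obtain ⟨⟨y, hy, rfl⟩, hyx⟩ := hv
  exact ⟨mem_outNbrs.mpr (hga y hy), Or.inl hyx⟩

end Host

section HostCases

variable {V ι : Type*} [Fintype V] [DecidableEq V] {A : V → V → Prop}
  [DecidableRel A] {X : Finset ι} {m : ι → ℕ} {d : ℕ}

lemma exists_isOutStarWithRoom_of_add_two_le (hloop : ∀ v, ¬ A v v) (hC4 : C4StarFree A)
    (hin : ∀ u v, A v u → d ≤ inDeg A u) {a : V} (ha : #X ≤ outDeg A a)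
    (hm : ∀ x ∈ X, m x + 2 ≤ d) : ∃ g, IsOutStarWithRoom A a g X m := by
  have : Nonempty V := ⟨a⟩
  obtain ⟨g, hg, hga⟩ := exists_injOn_mapsTo_of_card_le ha
  have hga : ∀ x ∈ X, A a (g x) := fun x hx => mem_outNbrs.mp (hga hx)
  refine ⟨g, isOutStarWithRoom_of_le hg hga fun x hx => ?_⟩
  have := hC4.card_filter_image_le_one hloop hga hx
  have := hin _ _ (hga x hx)
  have := hm x hx
  omega

lemma exists_isOutStarWithRoom_of_le [DecidableEq ι] (hloop : ∀ v, ¬ A v v)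
    (hC4 : C4StarFree A) (hin : ∀ u v, A v u → d ≤ inDeg A u)
    (hout : ∀ u v, A u v → d ≤ outDeg A u) (hbudget : #X + ∑ x ∈ X, m x ≤ 2 * d) {b : V}
    (hb : ∀ x ∈ X, m x + 2 ≤ inDeg A b) {x₀ : ι} (hx₀ : x₀ ∈ X) (hd : d ≤ m x₀) :
    ∃ a g, IsOutStarWithRoom A a g X m := by
  have : Nonempty V := ⟨b⟩
  obtain ⟨a, hab⟩ : ∃ a, A a b := by
    obtain ⟨a, ha⟩ := card_pos.mp (show 0 < inDeg A b by have := hb x₀ hx₀; omega)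
    exact ⟨a, mem_inNbrs.mp ha⟩
  have hx₀sum : m x₀ ≤ ∑ x ∈ X, m x := single_le_sum (fun _ _ => Nat.zero_le _) hx₀
  obtain ⟨g, hg, hgx₀, hgX⟩ := exists_injOn_of_card_erase_le (t := (outNbrs A a).erase b)
    hx₀ (notMem_erase b _) (by
      rw [card_erase_of_mem hx₀, card_erase_of_mem (mem_outNbrs.mpr hab), card_outNbrs]
      have := hout a b hab
      omega)
  have hga : ∀ x ∈ X, A a (g x) := fun x hx => by
    by_cases hxx₀ : x = x₀
    · exact hxx₀ ▸ hgx₀ ▸ hab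
    · exact mem_outNbrs.mp (mem_of_mem_erase (hgX (mem_erase.mpr ⟨hxx₀, hx⟩)))
  refine ⟨a, g, isOutStarWithRoom_of_le hg hga fun x hx => ?_⟩
  have hfilter := hC4.card_filter_image_le_one hloop hga hx
  by_cases hxx₀ : x = x₀
  · subst hxx₀
    have := hb x hx
    rw [hgx₀] at hfilter ⊢
    omega
  · have := add_le_sum (fun _ _ => Nat.zero_le _) hx₀ hx (Ne.symm hxx₀) (f := m)
    have := one_lt_card.mpr ⟨x, hx, x₀, hx₀, hxx₀⟩
    have := hin _ _ (hga x hx)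
    omega

lemma C4StarFree.exists_injOn_outNbrs_not_adj [DecidableEq ι] (hloop : ∀ v, ¬ A v v)
    (hC4 : C4StarFree A) {a u : V} (hau : A a u) (ha : #X < outDeg A a) {x₀ : ι}
    (hx₀ : x₀ ∈ X) :
    ∃ g : ι → V, Set.InjOn g X ∧ g x₀ = u ∧
      ∀ x ∈ X, x ≠ x₀ → A a (g x) ∧ ¬ A (g x) u ∧ ¬ A u (g x) := by
  have : Nonempty V := ⟨a⟩
  set P := (outNbrs A a).filter fun v => A v u ∨ A u v
  have hP : #P ≤ 1 := hC4.card_filter_outNbrs_le_one hloop hau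
  obtain ⟨g, hg, hgx₀, hgX⟩ := exists_injOn_of_card_erase_le (t := outNbrs A a \ insert u P)
    hx₀ (fun h => (mem_sdiff.mp h).2 (mem_insert_self u P)) (by
      have := le_card_sdiff (insert u P) (outNbrs A a)
      have := card_insert_le u P
      rw [card_erase_of_mem hx₀]
      rw [card_outNbrs] at *
      omega)
  refine ⟨g, hg, hgx₀, fun x hx hxx₀ => ?_⟩
  have := hgX (mem_erase.mpr ⟨hxx₀, hx⟩)
  simp only [mem_coe, mem_sdiff, mem_insert, P, mem_filter, mem_outNbrs, not_or] at this
  tauto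

lemma exists_isOutStarWithRoom_of_add_one_le [DecidableEq ι] (hloop : ∀ v, ¬ A v v)
    (hC4 : C4StarFree A) (hin : ∀ u v, A v u → d ≤ inDeg A u)
    (hbudget : #X + ∑ x ∈ X, m x ≤ 2 * d) {a : V} (ha : #X < outDeg A a)
    (hm : ∀ x ∈ X, m x + 1 ≤ d) {x₀ : ι} (hx₀ : x₀ ∈ X) (hd : d ≤ m x₀ + 1) :
    ∃ g, IsOutStarWithRoom A a g X m := by
  obtain ⟨u, hu⟩ := (card_pos (s := outNbrs A a)).mp (by rw [card_outNbrs]; omega)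
  obtain ⟨g, hg, hgx₀, hgX⟩ := hC4.exists_injOn_outNbrs_not_adj hloop (mem_outNbrs.mp hu) ha hx₀
  have hga : ∀ x ∈ X, A a (g x) := fun x hx => by
    by_cases hxx₀ : x = x₀
    · exact hxx₀ ▸ hgx₀ ▸ mem_outNbrs.mp hu
    · exact (hgX x hx hxx₀).1
  -- `g x₀`, and the image of a second child with `m x = d - 1` (then `X` consists of these two),
  -- have no in-neighbour among the images.
  have hfree : ∀ x ∈ X, (∀ y ∈ X, ¬ A (g y) (g x)) → #((X.image g).filter (A · (g x))) = 0 := by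
    intro x _ hx
    simp only [card_eq_zero, filter_eq_empty_iff, mem_image]
    rintro _ ⟨y, hy, rfl⟩
    exact hx y hy
  refine ⟨g, isOutStarWithRoom_of_le hg hga fun x hx => ?_⟩
  have := hin _ _ (hga x hx)
  have := hm x hx
  by_cases hxx₀ : x = x₀
  · subst hxx₀
    rw [hfree x hx fun y hy => ?_]
    · omega
    by_cases hyx : y = x
    · exact hyx ▸ hloop _
    · exact hgx₀ ▸ (hgX y hy hyx).2.1
  by_cases hlight : m x + 2 ≤ d
  · have := hC4.card_filter_image_le_one hloop hga hx
    omega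
  have := add_le_sum (fun _ _ => Nat.zero_le _) hx₀ hx (Ne.symm hxx₀) (f := m)
  have hX : X = {x₀, x} := (eq_of_subset_of_card_le (by simp [insert_subset_iff, hx₀, hx]) (by
    rw [card_pair (Ne.symm hxx₀)]; omega)).symm
  rw [hfree x hx fun y hy => ?_]
  · omega
  rw [hX, mem_insert, mem_singleton] at hy
  rcases hy with rfl | rfl
  · exact hgx₀ ▸ (hgX x hx hxx₀).2.2
  · exact hloop _

theorem exists_isOutStarWithRoom [DecidableEq ι] (hloop : ∀ v, ¬ A v v) (hC4 : C4StarFree A)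
    (hin : ∀ u v, A v u → d ≤ inDeg A u) (hout : ∀ u v, A u v → d ≤ outDeg A u)
    (hbudget : #X + ∑ x ∈ X, m x ≤ 2 * d) {a b : V} (ha : #X < outDeg A a)
    (hb : ∀ x ∈ X, m x + 2 ≤ inDeg A b) : ∃ a g, IsOutStarWithRoom A a g X m := by
  by_cases! hsuper : ∃ x ∈ X, d ≤ m x
  · obtain ⟨x₀, hx₀, hd⟩ := hsuper
    exact exists_isOutStarWithRoom_of_le hloop hC4 hin hout hbudget hb hx₀ hd
  refine ⟨a, ?_⟩
  by_cases! hheavy : ∃ x ∈ X, d ≤ m x + 1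
  · obtain ⟨x₀, hx₀, hd⟩ := hheavy
    exact exists_isOutStarWithRoom_of_add_one_le hloop hC4 hin hbudget ha hsuper hx₀ hd
  exact exists_isOutStarWithRoom_of_add_two_le hloop hC4 hin ha.le hheavy

end HostCases

section Source

variable {V : Type*} {A : V → V → Prop}

lemma IsOrientedTree.exists_outNbr_of_source_center (hS : IsOrientedTree A)
    (hanti : IsAntidirected A) {c : V} (hsrc : ∀ u, ¬ A u c)
    (hc : ∀ v, (underlying A).dist c v ≤ 2) {y : V} (hyc : y ≠ c) (hcy : ¬ A c y) :
    ∃ x, A c x ∧ ∀ z, A y z ↔ z = x := by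
  have hT := hS.2
  have hdist : (underlying A).dist c y = 2 := by
    have := hT.connected.one_lt_dist_of_ne_of_not_adj hyc.symm (fun h => h.2.elim hcy (hsrc y))
    have := hc y
    omega
  obtain ⟨x, hcx, hxy⟩ := (SimpleGraph.edist_eq_two_iff.mp
    (by rw [← (hT.connected c y).coe_dist_eq_edist, hdist]; rfl)).2.2
  have hAcx : A c x := hcx.2.resolve_right (hsrc x)
  have hxsink : ∀ z, ¬ A x z := (hanti x).resolve_left fun h => h c hAcx
  refine ⟨x, hAcx, fun z => ⟨fun hyz => ?_, fun hzx => hzx ▸ hxy.2.resolve_right (hxsink y)⟩⟩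
  have hyz : (underlying A).Adj y z := ⟨fun h => hS.1 y z ⟨hyz, h ▸ hyz⟩, Or.inl hyz⟩
  have hcz : (underlying A).Adj c z := by
    have := hT.dist_eq_dist_add_one_of_adj c hyz
    have := hc z
    exact SimpleGraph.dist_eq_one_iff_adj.mp (by omega)
  exact hT.isAcyclic.commonNeighbors_subsingleton hyc.symm ⟨hcz, hyz⟩ ⟨hcx, hxy⟩

end Source

section Embedding

variable {VS VD : Type*} [Fintype VS] [DecidableEq VS] [Fintype VD] [DecidableEq VD]
  {AS : VS → VS → Prop} [DecidableRel AS] {AD : VD → VD → Prop} [DecidableRel AD] {c : VS}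
  {a : VD} {g : VS → VD}

lemma exists_injOn_leaves (hloop : ∀ v, ¬ AD v v) (hC4 : C4StarFree AD)
    (hleaf : ∀ y, y ≠ c → ¬ AS c y → ∃ x, AS c x ∧ ∀ z, AS y z ↔ z = x)
    (hroom : IsOutStarWithRoom AD a g (outNbrs AS c) fun x => #((inNbrs AS x).erase c)) :
    ∃ ℓ : VS → VD, Set.InjOn ℓ {y | y ≠ c ∧ ¬ AS c y} ∧ ∀ y, y ≠ c → ¬ AS c y → ∀ x, AS y x →
      ℓ y ∈ inNbrs AD (g x) \ insert a ((outNbrs AS c).image g) := by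
  set X := outNbrs AS c
  obtain ⟨hg, hX⟩ := hroom
  have : Nonempty VD := ⟨a⟩
  have : Nonempty VS := ⟨c⟩
  choose! ℓ hℓinj hℓmaps using fun x (hx : x ∈ X) => exists_injOn_mapsTo_of_card_le (hX x hx).2
  -- the out-neighbour of a leaf `y`; junk for the other vertices
  let par : VS → VS := fun y => Classical.epsilon (AS y)
  have hpar : ∀ y, y ≠ c → ¬ AS c y →
      par y ∈ X ∧ y ∈ (inNbrs AS (par y)).erase c ∧ ∀ z, AS y z → z = par y := by
    intro y hyc hcy
    obtain ⟨x, hcx, hyx⟩ := hleaf y hyc hcy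
    obtain rfl : par y = x := (hyx _).mp (Classical.epsilon_spec ⟨x, (hyx x).mpr rfl⟩)
    exact ⟨mem_outNbrs.mpr hcx, mem_erase.mpr ⟨hyc, mem_inNbrs.mpr ((hyx _).mpr rfl)⟩,
      fun z => (hyx z).mp⟩
  have hmaps : ∀ y, y ≠ c → ¬ AS c y →
      ℓ (par y) y ∈ inNbrs AD (g (par y)) \ insert a (X.image g) := fun y hyc hcy =>
    hℓmaps _ (hpar y hyc hcy).1 (hpar y hyc hcy).2.1
  refine ⟨fun y => ℓ (par y) y, fun v ⟨hvc, hcv⟩ w ⟨hwc, hcw⟩ hvw => ?_,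
    fun y hyc hcy x hyx => (hpar y hyc hcy).2.2 x hyx ▸ hmaps y hyc hcy⟩
  beta_reduce at hvw
  obtain ⟨hvpar, hvmem, -⟩ := hpar v hvc hcv
  obtain ⟨hwpar, hwmem, -⟩ := hpar w hwc hcw
  have hfv := mem_sdiff.mp (hmaps v hvc hcv)
  have hfw := mem_sdiff.mp (hmaps w hwc hcw)
  obtain hparvw : par v = par w := by
    by_contra hne
    have := hC4.eq_of_common_inNbr hloop (hX _ hvpar).1 (hX _ hwpar).1
      (fun h => hne (hg hvpar hwpar h)) (mem_inNbrs.mp hfv.1) (hvw ▸ mem_inNbrs.mp hfw.1)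
    exact hfv.2 (by rw [this]; exact mem_insert_self a _)
  exact hℓinj _ hvpar hvmem (hparvw ▸ hwmem) (hparvw ▸ hvw)

theorem contains_of_isOutStarWithRoom (hloop : ∀ v, ¬ AD v v) (hC4 : C4StarFree AD)
    (hanti : IsAntidirected AS) (hsrc : ∀ u, ¬ AS u c)
    (hleaf : ∀ y, y ≠ c → ¬ AS c y → ∃ x, AS c x ∧ ∀ z, AS y z ↔ z = x)
    (hroom : IsOutStarWithRoom AD a g (outNbrs AS c) fun x => #((inNbrs AS x).erase c)) :
    Contains AS AD := by
  set X := outNbrs AS c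
  set B := insert a (X.image g)
  obtain ⟨ℓ, hℓinj, hℓ⟩ := exists_injOn_leaves hloop hC4 hleaf hroom
  obtain ⟨hg, hX⟩ := hroom
  let f : VS → VD := fun v => if v = c then a else if AS c v then g v else ℓ v
  have hfc : f c = a := if_pos rfl
  have hfX : ∀ x, AS c x → f x = g x := fun x hcx => by
    simp only [f, if_neg (fun h : x = c => hsrc c (h ▸ hcx)), if_pos hcx]
  have hfleaf : ∀ y, y ≠ c → ¬ AS c y → f y = ℓ y := fun y hyc hcy => by
    simp only [f, if_neg hyc, if_neg hcy]
  have hga : ∀ x, AS c x → g x ≠ a := fun x hx =>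
    (ne_of_arc hloop (hX x (mem_outNbrs.mpr hx)).1).symm
  have hfB : ∀ v, v = c ∨ AS c v → f v ∈ B := by
    rintro v (rfl | hv)
    · exact hfc ▸ mem_insert_self a _
    · exact hfX v hv ▸ mem_insert_of_mem (mem_image_of_mem g (mem_outNbrs.mpr hv))
  have hfnotB : ∀ y, y ≠ c → ¬ AS c y → f y ∉ B := fun y hyc hcy => by
    obtain ⟨x, hcx, hyx⟩ := hleaf y hyc hcy
    exact hfleaf y hyc hcy ▸ (mem_sdiff.mp (hℓ y hyc hcy x ((hyx x).mpr rfl))).2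
  refine ⟨f, fun v w hvw => ?_, fun p q hpq => ?_⟩
  · by_cases hv : v = c ∨ AS c v <;> by_cases hw : w = c ∨ AS c w
    · rcases hv with rfl | hv <;> rcases hw with rfl | hw
      · rfl
      · exact absurd (hfc ▸ hfX w hw ▸ hvw).symm (hga w hw)
      · exact absurd (hfc ▸ hfX v hv ▸ hvw) (hga v hv)
      · exact hg (mem_outNbrs.mpr hv) (mem_outNbrs.mpr hw) (hfX v hv ▸ hfX w hw ▸ hvw)
    · exact absurd (hvw ▸ hfB v hv) (hfnotB w (not_or.mp hw).1 (not_or.mp hw).2)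
    · exact absurd (hvw ▸ hfB w hw) (hfnotB v (not_or.mp hv).1 (not_or.mp hv).2)
    · obtain ⟨hvc, hcv⟩ := not_or.mp hv
      obtain ⟨hwc, hcw⟩ := not_or.mp hw
      exact hℓinj ⟨hvc, hcv⟩ ⟨hwc, hcw⟩ (hfleaf v hvc hcv ▸ hfleaf w hwc hcw ▸ hvw)
  · by_cases hpc : p = c
    · subst hpc
      rw [hfc, hfX q hpq]
      exact (hX q (mem_outNbrs.mpr hpq)).1
    have hcp : ¬ AS c p := fun hcp => ((hanti p).resolve_left fun h => h c hcp) q hpq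
    obtain ⟨x, hcx, hpx⟩ := hleaf p hpc hcp
    obtain rfl := (hpx q).mp hpq
    rw [hfX _ hcx, hfleaf p hpc hcp]
    exact mem_inNbrs.mp (mem_sdiff.mp (hℓ p hpc hcp _ hpq)).1

end Embedding

theorem contains_of_source_center {VS VD : Type*} [Fintype VS] [DecidableEq VS] [Fintype VD]
    (AS : VS → VS → Prop) [DecidableRel AS] (AD : VD → VD → Prop) [DecidableRel AD] (k : ℕ)
    (hS : IsOrientedTree AS) (hanti : IsAntidirected AS) (hSarcs : numArcs AS ≤ k) {c : VS}
    (hc : ∀ v, (underlying AS).dist c v ≤ 2) (hsrc : ∀ u, ¬ AS u c)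
    (hloop : ∀ v, ¬ AD v v)
    (hpseudo : ∀ v, (0 < outDeg AD v → k ≤ 2 * outDeg AD v) ∧
      (0 < inDeg AD v → k ≤ 2 * inDeg AD v))
    (hC4 : C4StarFree AD)
    (hΔout : ∃ a, ∀ s, totDeg AS s < outDeg AD a) (hΔin : ∃ b, ∀ s, totDeg AS s < inDeg AD b) :
    Contains AS AD := by
  classical
  set X := outNbrs AS c
  have hin : ∀ u v, AD v u → (k + 1) / 2 ≤ inDeg AD u := fun u v h => by
    have := (hpseudo u).2 (card_pos.mpr ⟨v, mem_inNbrs.mpr h⟩)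
    omega
  have hout : ∀ u v, AD u v → (k + 1) / 2 ≤ outDeg AD u := fun u v h => by
    have := (hpseudo u).1 (card_pos.mpr ⟨v, mem_outNbrs.mpr h⟩)
    omega
  have hinDeg : ∀ x ∈ X, inDeg AS x = #((inNbrs AS x).erase c) + 1 := fun x hx =>
    (card_erase_add_one (mem_inNbrs.mpr (mem_outNbrs.mp hx))).symm
  have htotDeg : ∀ x ∈ X, totDeg AS x = inDeg AS x := fun x hx =>
    totDeg_eq_inDeg ((hanti x).resolve_left fun h => h c (mem_outNbrs.mp hx))
  have hbudget : #X + ∑ x ∈ X, #((inNbrs AS x).erase c) ≤ 2 * ((k + 1) / 2) :=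
    calc #X + ∑ x ∈ X, #((inNbrs AS x).erase c) = ∑ x ∈ X, inDeg AS x := by
          rw [sum_congr rfl hinDeg, sum_add_distrib, sum_const, smul_eq_mul, mul_one, add_comm]
      _ ≤ ∑ x, inDeg AS x := sum_le_sum_of_subset (subset_univ X)
      _ = numArcs AS := numArcs_eq_sum_inDeg.symm
      _ ≤ 2 * ((k + 1) / 2) := by omega
  obtain ⟨a, ha⟩ := hΔout
  obtain ⟨b, hb⟩ := hΔin
  obtain ⟨a', g, hroom⟩ := exists_isOutStarWithRoom (a := a) (b := b) hloop hC4 hin hout hbudget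
    (by rw [card_outNbrs, ← totDeg_eq_outDeg hsrc]; exact ha c) fun x hx => by
      have := hb x
      rw [htotDeg x hx, hinDeg x hx] at this
      omega
  exact contains_of_isOutStarWithRoom hloop hC4 hanti hsrc
    (fun y => hS.exists_outNbr_of_source_center hanti hsrc hc) hroom

theorem small_diameter_antidirected_tree_embeds_general
    {VS VD : Type*} [Fintype VS] [DecidableEq VS] [Fintype VD]
    (AS : VS → VS → Prop) [DecidableRel AS] (AD : VD → VD → Prop) [DecidableRel AD]
    (k : ℕ)
    (hS : IsOrientedTree AS) (hSanti : IsAntidirected AS) (hSarcs : numArcs AS ≤ k)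
    (hdiam : ∀ x y : VS, (underlying AS).dist x y ≤ 4)
    (hDloopless : ∀ v : VD, ¬ AD v v)
    (hpseudo : ∀ v : VD, (0 < outDeg AD v → k ≤ 2 * outDeg AD v) ∧
      (0 < inDeg AD v → k ≤ 2 * inDeg AD v))
    (hC4 : C4StarFree AD)
    (hΔout : ∃ a : VD, ∀ s : VS, totDeg AS s < outDeg AD a)
    (hΔin : ∃ b : VD, ∀ s : VS, totDeg AS s < inDeg AD b) :
    Contains AS AD := by
  obtain ⟨c, hc⟩ := hS.2.exists_forall_dist_le (n := 2) hdiam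
  rcases hSanti c with hsrc | hsink
  · exact contains_of_source_center AS AD k hS hSanti hSarcs hc hsrc hDloopless hpseudo hC4
      hΔout hΔin
  -- A sink centre is a source centre of the reversed tree, embedded in the reversed digraph.
  refine Contains.of_flip (contains_of_source_center (flip AS) (flip AD) k hS.flip hSanti.flip
    (by rwa [numArcs_flip]) (by rwa [underlying_flip]) hsink hDloopless (fun v => (hpseudo v).symm)
    hC4.flip ?_ ?_)
  · obtain ⟨b, hb⟩ := hΔin
    exact ⟨b, fun s => totDeg_flip (A := AS) s ▸ hb s⟩
  · obtain ⟨a, ha⟩ := hΔout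
    exact ⟨a, fun s => totDeg_flip (A := AS) s ▸ ha s⟩

/-- **Claim (small-diameter antidirected subtrees embed).** Let `S` be an
antidirected tree with at most `k` arcs whose underlying tree has diameter at
most 4. If `D` has minimum pseudo-semidegree at least `k/2`, all 4-cycles of `D`
are directed, and `Δ±(D) > Δᵗᵒᵗ(S)`, then `D` contains `S`. -/
theorem small_diameter_antidirected_tree_embeds
    {VS VD : Type*} [Fintype VS] [DecidableEq VS] [Fintype VD]
    (AS : VS → VS → Prop) [DecidableRel AS] (AD : VD → VD → Prop) [DecidableRel AD]
    (k : ℕ) (hk : 0 < k)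
    (hS : IsOrientedTree AS) (hSanti : IsAntidirected AS) (hSarcs : numArcs AS ≤ k)
    (hdiam : ∀ x y : VS, (underlying AS).dist x y ≤ 4)
    (hDloopless : ∀ v : VD, ¬ AD v v)
    (hDarcs : ∃ x y : VD, AD x y)
    (hpseudo : ∀ v : VD, (0 < outDeg AD v → k ≤ 2 * outDeg AD v) ∧
      (0 < inDeg AD v → k ≤ 2 * inDeg AD v))
    (hC4 : C4StarFree AD)
    (hΔout : ∃ a : VD, ∀ s : VS, totDeg AS s < outDeg AD a)
    (hΔin : ∃ b : VD, ∀ s : VS, totDeg AS s < inDeg AD b) :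
    Contains AS AD :=
  small_diameter_antidirected_tree_embeds_general AS AD k hS hSanti hSarcs hdiam hDloopless hpseudo
    hC4 hΔout hΔin
end

section
/- Let m ≥ 1 and n ≥ 3 be integers and let O be the blow-up of the directed n-cycle by independent sets of size m: its vertex set is the disjoint union of sets V₁, …, Vₙ, each of size m, and its arcs are exactly all pairs (u,v) with u ∈ Vᵢ and v ∈ V_{i+1} (indices modulo n). Then δ⁰(O) = m; every connected antidirected subdigraph of O containing at least one arc has all its vertices in Vᵢ ∪ V_{i+1} for some i; and consequently O contains no antidirected tree with more than 2m vertices — in particular, O contains no antidirected tree with 2m arcs. -/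
open Finset

/-- The arc relation of the blow-up of the directed `n`-cycle by independent sets
of size `m`: the vertex classes are `Vᵢ = {i} × Fin m`, and all arcs go from
`Vᵢ` to `V_{i+1}` (indices modulo `n`). -/
def blowupArcs (n m : ℕ) [NeZero n] (p q : Fin n × Fin m) : Prop := q.1 = p.1 + 1

instance (n m : ℕ) [NeZero n] : DecidableRel (blowupArcs n m) :=
  fun p q => inferInstanceAs (Decidable (q.1 = p.1 + 1))

/-!
Arcs of the blow-up raise the class index `i` of `Vᵢ` by one. In a connected antidirected
digraph with an arc `x → y`, this propagates along edges: every vertex is a source in the class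
of `x` or a sink in the next class, since a neighbour of a source is an out-neighbour (one class
up, hence a sink) and a neighbour of a sink is an in-neighbour (one class down, hence a source).
So an embedded antidirected tree lies in two consecutive classes, which have `2m` vertices
together, whereas a tree with `2m` arcs has `2m + 1` vertices.
-/

section Levels

variable {W G : Type*} [Add G] [IsRightCancelAdd G] [One G] {B : W → W → Prop} {ℓ : W → G}

theorem IsAntidirected.source_or_sink_of_arc (hanti : IsAntidirected B)
    (hconn : (underlying B).Connected) (hℓ : ∀ x y, B x y → ℓ y = ℓ x + 1)
    {x y : W} (hxy : B x y) (w : W) :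
    (ℓ w = ℓ x ∧ ∀ u, ¬ B u w) ∨ (ℓ w = ℓ x + 1 ∧ ∀ u, ¬ B w u) := by
  set Q : W → Prop := fun w => (ℓ w = ℓ x ∧ ∀ u, ¬ B u w) ∨ (ℓ w = ℓ x + 1 ∧ ∀ u, ¬ B w u)
  have hQx : Q x := (hanti x).imp (fun h => ⟨rfl, h⟩) (fun h => absurd hxy (h y))
  have hstep : ∀ a b, (underlying B).Adj a b → Q a → Q b := by
    rintro a b ⟨-, hab | hba⟩ (⟨ha, hin⟩ | ⟨ha, hout⟩)
    · exact .inr ⟨(hℓ a b hab).trans (by rw [ha]), (hanti b).resolve_left (· a hab)⟩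
    · exact absurd hab (hout b)
    · exact absurd hba (hin b)
    · exact .inl ⟨add_right_cancel ((hℓ b a hba).symm.trans ha),
        (hanti b).resolve_right (· a hba)⟩
  induction (SimpleGraph.reachable_iff_reflTransGen x w).1 (hconn x w) with
  | refl => exact hQx
  | tail _ hab ih => exact hstep _ _ hab ih

theorem IsAntidirected.level_eq_or_eq_add_one (hanti : IsAntidirected B)
    (hconn : (underlying B).Connected) (hℓ : ∀ x y, B x y → ℓ y = ℓ x + 1)
    {x y : W} (hxy : B x y) (w : W) : ℓ w = ℓ x ∨ ℓ w = ℓ x + 1 :=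
  (hanti.source_or_sink_of_arc hconn hℓ hxy w).imp And.left And.left

end Levels

theorem exists_arc_of_connected {W : Type*} [Nontrivial W] {B : W → W → Prop}
    (hconn : (underlying B).Connected) : ∃ x y, B x y := by
  obtain ⟨x⟩ := hconn.nonempty
  obtain ⟨y, -, hxy | hyx⟩ := hconn.preconnected.exists_adj_of_nontrivial x
  exacts [⟨x, y, hxy⟩, ⟨y, x, hyx⟩]

theorem Fintype.card_le_card_mul_of_injective_of_fst_mem {W α β : Type*} [Fintype W]
    [Fintype β] {f : W → α × β} (hf : Function.Injective f) (s : Finset α)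
    (hs : ∀ w, (f w).1 ∈ s) : Fintype.card W ≤ #s * Fintype.card β := by
  rw [← card_univ, ← card_univ (α := β), ← card_product]
  exact card_le_card_of_injOn f (fun w _ => mem_product.2 ⟨hs w, mem_univ _⟩) hf.injOn

theorem numArcs_eq_card_edgeFinset {W : Type*} [Fintype W] [DecidableEq W]
    {B : W → W → Prop} [DecidableRel B] [Fintype (underlying B).edgeSet]
    (hasymm : ∀ x y, ¬ (B x y ∧ B y x)) :
    numArcs B = (underlying B).edgeFinset.card := by
  refine card_bij (fun p _ => s(p.1, p.2)) ?_ ?_ ?_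
  · rintro ⟨a, b⟩ hp
    replace hp : B a b := (mem_filter.1 hp).2
    refine SimpleGraph.mem_edgeFinset.2 ⟨fun (h : a = b) => ?_, .inl hp⟩
    subst h
    exact hasymm a a ⟨hp, hp⟩
  · rintro ⟨a, b⟩ hp ⟨c, d⟩ hq h
    replace hp : B a b := (mem_filter.1 hp).2
    replace hq : B c d := (mem_filter.1 hq).2
    rcases Sym2.eq_iff.1 h with ⟨rfl, rfl⟩ | ⟨rfl, rfl⟩
    · rfl
    · exact absurd ⟨hp, hq⟩ (hasymm a b)
  · intro e he
    induction e with
    | _ a b =>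
      rcases (SimpleGraph.mem_edgeFinset.1 he).2 with h | h
      · exact ⟨(a, b), by simpa using h, rfl⟩
      · exact ⟨(b, a), by simpa using h, Sym2.eq_swap⟩

theorem IsOrientedTree.numArcs_add_one {W : Type*} [Fintype W] {B : W → W → Prop}
    [DecidableRel B] (htree : IsOrientedTree B) : numArcs B + 1 = Fintype.card W := by
  classical
  rw [numArcs_eq_card_edgeFinset htree.1, htree.2.card_edgeFinset]

section Blowup

variable {n m : ℕ} [NeZero n]

theorem outDeg_blowupArcs (v : Fin n × Fin m) : outDeg (blowupArcs n m) v = m := by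
  have : univ.filter (blowupArcs n m v) = {v.1 + 1} ×ˢ univ := by
    ext ⟨i, j⟩; simp [blowupArcs, eq_comm]
  simp [outDeg, this]

theorem inDeg_blowupArcs (v : Fin n × Fin m) : inDeg (blowupArcs n m) v = m := by
  have : univ.filter (fun w => blowupArcs n m w v) = {v.1 - 1} ×ˢ univ := by
    ext ⟨i, j⟩
    rw [mem_filter]
    simp [blowupArcs, eq_sub_iff_add_eq, eq_comm]
  simp [inDeg, this]

theorem not_contains_blowupArcs_of_two_mul_lt_card {W : Type*} [Fintype W]
    {B : W → W → Prop} (htree : IsOrientedTree B) (hanti : IsAntidirected B)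
    (hcard : 2 * m < Fintype.card W) : ¬ Contains B (blowupArcs n m) := by
  rintro ⟨f, hinj, hmap⟩
  obtain ⟨w₀⟩ : Nonempty W := Fintype.card_pos_iff.1 (by omega)
  have : Nontrivial W := by
    have := Fin.pos_iff_nonempty.2 ⟨(f w₀).2⟩
    exact Fintype.one_lt_card_iff_nontrivial.1 (by omega)
  obtain ⟨x, y, hxy⟩ := exists_arc_of_connected htree.2.connected
  have hlevels (w : W) : (f w).1 ∈ ({(f x).1, (f x).1 + 1} : Finset (Fin n)) := by
    simpa using hanti.level_eq_or_eq_add_one htree.2.connected hmap hxy w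
  have : Fintype.card W ≤ 2 * m := calc
    _ ≤ #{(f x).1, (f x).1 + 1} * Fintype.card (Fin m) :=
      Fintype.card_le_card_mul_of_injective_of_fst_mem hinj _ hlevels
    _ ≤ 2 * m := by rw [Fintype.card_fin]; exact Nat.mul_le_mul_right m card_le_two
  omega

end Blowup

theorem blowup_directed_cycle_general
    (m n : ℕ) [NeZero n] :
    (∀ v : Fin n × Fin m, outDeg (blowupArcs n m) v = m ∧ inDeg (blowupArcs n m) v = m) ∧
    (∀ (W : Type) (B : W → W → Prop) (g : W → Fin n × Fin m),
      Function.Injective g → (∀ x y : W, B x y → blowupArcs n m (g x) (g y)) →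
      (underlying B).Connected → IsAntidirected B → (∃ x y : W, B x y) →
      ∃ i : Fin n, ∀ w : W, (g w).1 = i ∨ (g w).1 = i + 1) ∧
    (∀ (W : Type) [Fintype W] (B : W → W → Prop),
      IsOrientedTree B → IsAntidirected B → 2 * m < Fintype.card W →
      ¬ Contains B (blowupArcs n m)) ∧
    (∀ (W : Type) [Fintype W] (B : W → W → Prop) [DecidableRel B],
      IsOrientedTree B → IsAntidirected B → numArcs B = 2 * m →
      ¬ Contains B (blowupArcs n m)) := by
  refine ⟨fun v => ⟨outDeg_blowupArcs v, inDeg_blowupArcs v⟩, ?_, ?_, ?_⟩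
  · rintro W B g - hg hconn hanti ⟨x, y, hxy⟩
    exact ⟨(g x).1, hanti.level_eq_or_eq_add_one hconn hg hxy⟩
  · intro W _ B htree hanti hcard
    exact not_contains_blowupArcs_of_two_mul_lt_card htree hanti hcard
  · intro W _ B _ htree hanti harcs
    exact not_contains_blowupArcs_of_two_mul_lt_card htree hanti
      (by rw [← htree.numArcs_add_one]; omega)

/-- **Claim (the blow-up of a directed cycle).** For `m ≥ 1` and `n ≥ 3`, the
blow-up `O` of the directed `n`-cycle by independent sets of size `m` has
minimum semidegree `m` (indeed every out- and in-degree equals `m`); every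
connected antidirected subdigraph of `O` containing an arc has all its vertices
in `Vᵢ ∪ V_{i+1}` for some `i`; consequently `O` contains no antidirected tree
with more than `2m` vertices, and in particular none with `2m` arcs. -/
theorem blowup_directed_cycle
    (m n : ℕ) [NeZero n] (hm : 1 ≤ m) (hn : 3 ≤ n) :
    (∀ v : Fin n × Fin m, outDeg (blowupArcs n m) v = m ∧ inDeg (blowupArcs n m) v = m) ∧
    (∀ (W : Type) (B : W → W → Prop) (g : W → Fin n × Fin m),
      Function.Injective g → (∀ x y : W, B x y → blowupArcs n m (g x) (g y)) →
      (underlying B).Connected → IsAntidirected B → (∃ x y : W, B x y) →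
      ∃ i : Fin n, ∀ w : W, (g w).1 = i ∨ (g w).1 = i + 1) ∧
    (∀ (W : Type) [Fintype W] (B : W → W → Prop),
      IsOrientedTree B → IsAntidirected B → 2 * m < Fintype.card W →
      ¬ Contains B (blowupArcs n m)) ∧
    (∀ (W : Type) [Fintype W] (B : W → W → Prop) [DecidableRel B],
      IsOrientedTree B → IsAntidirected B → numArcs B = 2 * m →
      ¬ Contains B (blowupArcs n m)) :=
  blowup_directed_cycle_general m n
end

section
/- Let k ≥ 6 be an integer divisible by 6. Let G be the undirected graph whose vertex set is the disjoint union of sets A and B, each of size k/2, together with one further vertex u, whose edges are all pairs inside A, all pairs inside B, and all pairs containing u. Let D be the digraph obtained from G by replacing every edge by arcs in both directions. Then the minimum semidegree of D equals k/2 and Δ±(D) = k, but D does not contain any orientation of the spider Sₖ — the tree consisting of a centre vertex with three pendant paths attached, each path having k/3 edges — as a subdigraph. -/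
open Finset

/-- The spider `Sₖ` with `k = 3m` edges: a centre vertex (`none`) with three
pendant paths attached, each with `m` edges. The vertex `some (j, i)` is the
`(i+1)`-st vertex on the `j`-th path. -/
def spiderAdj (m : ℕ) : Option (Fin 3 × Fin m) → Option (Fin 3 × Fin m) → Prop
  | none, none => False
  | none, some (_, i) => (i : ℕ) = 0
  | some (_, i), none => (i : ℕ) = 0
  | some (j, i), some (j₂, i₂) => j = j₂ ∧ ((i : ℕ) + 1 = i₂ ∨ (i₂ : ℕ) + 1 = i)

/-- The block of a vertex: `0` for the first clique `A`, `1` for the second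
clique `B`, `2` for the universal vertex `u`. -/
def blk {m : ℕ} : Fin m ⊕ Fin m ⊕ Unit → Fin 3
  | Sum.inl _ => 0
  | Sum.inr (Sum.inl _) => 1
  | Sum.inr (Sum.inr _) => 2


/-- The digraph obtained from the graph consisting of two cliques `A`, `B` of
size `m` together with a universal vertex `u`, by replacing each edge with arcs
in both directions. -/
def hostArcs (m : ℕ) (x y : Fin m ⊕ Fin m ⊕ Unit) : Prop :=
  x ≠ y ∧ (blk x = blk y ∨ blk x = 2 ∨ blk y = 2)

instance (m : ℕ) : DecidableRel (hostArcs m) :=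
  fun x y => inferInstanceAs (Decidable (x ≠ y ∧ (blk x = blk y ∨ blk x = 2 ∨ blk y = 2)))

/-!
An embedding of the spider into `D` sends at most one spider vertex `w` to the universal vertex
`u`. Since `A` and `B` are joined only through `u`, adjacent spider vertices other than `w` land
in the same clique. Hence two whole legs land in one clique: if `w` is the centre, by pigeonhole
over three legs and two cliques; otherwise the two legs missing `w` are joined through the
centre. But two legs have `2k/3 > k/2` vertices.
-/

section Spider

variable {l : ℕ} {β : Type*} (c : Option (Fin 3 × Fin l) → β) (w : Option (Fin 3 × Fin l))

theorem spider_leg_const (hc : ∀ x y, spiderAdj l x y → x ≠ w → y ≠ w → c x = c y)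
    (hl : 0 < l) {j : Fin 3} (hj : ∀ i, some (j, i) ≠ w) (i : Fin l) :
    c (some (j, i)) = c (some (j, ⟨0, hl⟩)) := by
  obtain ⟨n, hn⟩ := i
  induction n with
  | zero => rfl
  | succ n ih => rw [← ih (by omega)]; exact hc _ _ ⟨rfl, Or.inr rfl⟩ (hj _) (hj _)

theorem spider_exists_two_legs_monochromatic
    (hc : ∀ x y, spiderAdj l x y → x ≠ w → y ≠ w → c x = c y) (s : Finset β)
    (hs : #s ≤ 2) (hcs : ∀ x, x ≠ w → c x ∈ s) (hl : 0 < l) :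
    ∃ j₁ j₂, j₁ ≠ j₂ ∧ ∃ b ∈ s, ∀ i, c (some (j₁, i)) = b ∧ c (some (j₂, i)) = b := by
  rcases w with _ | ⟨j₀, i₀⟩
  · obtain ⟨j₁, -, j₂, -, hne, heq⟩ := exists_ne_map_eq_of_card_lt_of_maps_to
      (s := univ) (t := s) (by simpa using hs.trans_lt (by norm_num))
      (fun j _ => hcs (some (j, ⟨0, hl⟩)) (Option.some_ne_none _))
    have hleg (j : Fin 3) (i : Fin l) : c (some (j, i)) = c (some (j, ⟨0, hl⟩)) :=
      spider_leg_const c none hc hl (fun _ => Option.some_ne_none _) i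
    exact ⟨j₁, j₂, hne, _, hcs _ (Option.some_ne_none _),
      fun i => ⟨hleg j₁ i, (hleg j₂ i).trans heq.symm⟩⟩
  · have hothers : ∀ j₀ : Fin 3, ∃ j₁ j₂, j₁ ≠ j₂ ∧ j₁ ≠ j₀ ∧ j₂ ≠ j₀ := by decide
    obtain ⟨j₁, j₂, h₁₂, h₁, h₂⟩ := hothers j₀
    have hleg (j : Fin 3) (hj : j ≠ j₀) (i : Fin l) : c (some (j, i)) = c none := by
      have hjw : ∀ i, some (j, i) ≠ some (j₀, i₀) := by simp [hj]
      rw [spider_leg_const c _ hc hl hjw i]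
      exact (hc none (some (j, ⟨0, hl⟩)) rfl (Option.some_ne_none _).symm (hjw _)).symm
    exact ⟨j₁, j₂, h₁₂, c none, hcs _ (Option.some_ne_none _).symm,
      fun i => ⟨hleg j₁ h₁ i, hleg j₂ h₂ i⟩⟩

end Spider

section Host

variable {m : ℕ}

theorem hostArcs_comm {x y : Fin m ⊕ Fin m ⊕ Unit} : hostArcs m x y ↔ hostArcs m y x := by
  simp only [hostArcs, ne_comm, eq_comm]
  tauto

theorem outDeg_hostArcs (v : Fin m ⊕ Fin m ⊕ Unit) :
    outDeg (hostArcs m) v = if blk v = 2 then 2 * m else m := by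
  rw [outDeg, card_filter, Fintype.sum_sum_type, Fintype.sum_sum_type]
  rcases v with a | a | ⟨⟩ <;> simp [hostArcs, blk, sum_ite, filter_ne]
  all_goals first | omega | have := a.pos; omega

theorem inDeg_hostArcs (v : Fin m ⊕ Fin m ⊕ Unit) :
    inDeg (hostArcs m) v = outDeg (hostArcs m) v := by
  simp only [inDeg, outDeg, hostArcs_comm]

theorem card_filter_blk_eq (b : Fin 3) (hb : b ≠ 2) :
    #{v : Fin m ⊕ Fin m ⊕ Unit | blk v = b} = m := by
  rw [card_filter, Fintype.sum_sum_type, Fintype.sum_sum_type]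
  fin_cases b <;> simp_all [blk]

theorem eq_of_blk_eq_two {x y : Fin m ⊕ Fin m ⊕ Unit} (hx : blk x = 2) (hy : blk y = 2) :
    x = y := by
  rcases x with _ | _ | ⟨⟩ <;> rcases y with _ | _ | ⟨⟩ <;> simp_all [blk]

theorem blk_eq_of_hostArcs {x y : Fin m ⊕ Fin m ⊕ Unit} (h : hostArcs m x y) (hx : blk x ≠ 2)
    (hy : blk y ≠ 2) : blk x = blk y :=
  h.2.resolve_right (not_or.2 ⟨hx, hy⟩)

theorem not_contains_hostArcs_of_spiderAdj {l : ℕ} (hlm : m < 2 * l)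
    {B : Option (Fin 3 × Fin l) → Option (Fin 3 × Fin l) → Prop}
    (hB : ∀ x y, spiderAdj l x y → B x y ∨ B y x) : ¬ Contains B (hostArcs m) := by
  rintro ⟨f, hf, hfB⟩
  have hadj (x y) (h : spiderAdj l x y) : hostArcs m (f x) (f y) :=
    (hB x y h).elim (hfB x y) fun h' => hostArcs_comm.1 (hfB y x h')
  obtain ⟨w, hw⟩ : ∃ w, ∀ x, x ≠ w → blk (f x) ≠ 2 := by
    by_cases h : ∃ w, blk (f w) = 2
    · obtain ⟨w, hw⟩ := h
      exact ⟨w, fun x hx hx2 => hx (hf (eq_of_blk_eq_two hx2 hw))⟩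
    · push Not at h
      exact ⟨none, fun x _ => h x⟩
  obtain ⟨j₁, j₂, hne, b, hb, hlegs⟩ := spider_exists_two_legs_monochromatic (blk ∘ f) w
    (fun x y hxy hx hy => blk_eq_of_hostArcs (hadj x y hxy) (hw x hx) (hw y hy))
    (univ.erase 2) (by decide) (fun x hx => mem_erase.2 ⟨hw x hx, mem_univ _⟩) (by omega)
  have hmaps : ∀ x ∈ ({j₁, j₂} ×ˢ univ).image some, f x ∈ ({v | blk v = b} : Finset _) := by
    simp only [mem_image, mem_product, mem_insert, mem_singleton, mem_univ, and_true, mem_filter,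
      true_and]
    rintro _ ⟨⟨j, i⟩, hj | hj, rfl⟩ <;> subst hj
    exacts [(hlegs i).1, (hlegs i).2]
  have hcard := card_le_card_of_injOn f hmaps hf.injOn
  rw [card_filter_blk_eq b (ne_of_mem_erase hb),
    card_image_of_injective _ (Option.some_injective _), card_product, card_pair hne,
    card_univ, Fintype.card_fin] at hcard
  omega

end Host

/-- **Claim (extremal example, digraph version).** For `6 ∣ k`, `k ≥ 6`, the
bidirected digraph `D` on two cliques of size `k/2` plus a universal vertex has
minimum semidegree exactly `k/2` and `Δ±(D) = k`, yet contains no orientation of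
the spider `Sₖ` (centre with three pendant paths of `k/3` edges each). -/
theorem extremal_digraph_spider
    (k : ℕ) (hk : 6 ≤ k) (hdvd : 6 ∣ k) :
    ((∀ v, k / 2 ≤ outDeg (hostArcs (k / 2)) v ∧ k / 2 ≤ inDeg (hostArcs (k / 2)) v) ∧
      (∃ v, outDeg (hostArcs (k / 2)) v = k / 2 ∧ inDeg (hostArcs (k / 2)) v = k / 2)) ∧
    ((∀ v, outDeg (hostArcs (k / 2)) v ≤ k ∧ inDeg (hostArcs (k / 2)) v ≤ k) ∧
      (∃ v, outDeg (hostArcs (k / 2)) v = k) ∧ (∃ v, inDeg (hostArcs (k / 2)) v = k)) ∧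
    (∀ B : Option (Fin 3 × Fin (k / 3)) → Option (Fin 3 × Fin (k / 3)) → Prop,
      (∀ x y, (B x y ∨ B y x) ↔ spiderAdj (k / 3) x y) →
      (∀ x y, ¬ (B x y ∧ B y x)) →
      ¬ Contains B (hostArcs (k / 2))) := by
  simp only [inDeg_hostArcs, outDeg_hostArcs]
  refine ⟨⟨fun v => ?_, Sum.inl ⟨0, by omega⟩, ?_⟩, ⟨fun v => ?_, ⟨Sum.inr (Sum.inr ()), ?_⟩,
    ⟨Sum.inr (Sum.inr ()), ?_⟩⟩, fun B hB _ =>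
      not_contains_hostArcs_of_spiderAdj (by omega) fun x y h => (hB x y).2 h⟩
  all_goals split_ifs <;> simp_all [blk] <;> omega
end

section
/- Let k ≥ 6 be an integer divisible by 3, and let G be the undirected graph consisting of two disjoint cliques, each on 2k/3 − 1 vertices, together with one further vertex adjacent to all other vertices. Then G has minimum degree 2k/3 − 1 and maximum degree 2(2k/3 − 1) ≥ k, but G does not contain the spider Sₖ — the tree consisting of a centre vertex with three pendant paths attached, each path having k/3 edges — as a subgraph. -/
open Finset

/-- The undirected graph consisting of two disjoint cliques of size `m` together
with one further vertex adjacent to all other vertices. -/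
def cliquesPlusUniversal (m : ℕ) : SimpleGraph (Fin m ⊕ Fin m ⊕ Unit) where
  Adj x y := x ≠ y ∧ (blk x = blk y ∨ blk x = 2 ∨ blk y = 2)
  symm := by
    refine ⟨?_⟩
    intro x y h
    refine ⟨h.1.symm, ?_⟩
    rcases h.2 with h' | h' | h'
    · exact Or.inl h'.symm
    · exact Or.inr (Or.inr h')
    · exact Or.inr (Or.inl h')
  loopless := ⟨fun x h => h.1 rfl⟩

instance (m : ℕ) : DecidableRel (cliquesPlusUniversal m).Adj :=
  fun x y => inferInstanceAs (Decidable (x ≠ y ∧ (blk x = blk y ∨ blk x = 2 ∨ blk y = 2)))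

/-!
Apart from the universal vertex `u`, the graph is two disjoint cliques of size `m = 2k/3 - 1`,
so an arm of the spider (a path on `k/3` vertices) whose image misses `u` lies in one clique.
At most one vertex of the spider goes to `u`. If it is the centre, all three arms miss `u` and
two of them share a clique by pigeonhole; otherwise at least two arms miss `u`, and both lie in
the clique of the centre. Either way one clique receives `2k/3 > m` vertices.
-/

open Function

namespace cliquesPlusUniversal

variable {m : ℕ}

lemma card_filter_blk {b : Fin 3} (hb : b ≠ 2) :
    #{w : Fin m ⊕ Fin m ⊕ Unit | blk w = b} = m := by
  obtain rfl | rfl : b = 0 ∨ b = 1 := by omega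
  all_goals rw [Finset.card_filter]; simp [Fintype.sum_sum_type, blk]

lemma degree_of_blk_ne_two {v : Fin m ⊕ Fin m ⊕ Unit} (hv : blk v ≠ 2) :
    (cliquesPlusUniversal m).degree v = m := by
  rw [← SimpleGraph.card_neighborFinset_eq_degree, SimpleGraph.neighborFinset_eq_filter,
    Finset.card_filter, Fintype.sum_sum_type, Fintype.sum_sum_type]
  rcases v with a | a | _
  iterate 2
    simpa [blk, cliquesPlusUniversal, Finset.sum_ite, Finset.filter_not, Finset.filter_eq,
      Finset.card_sdiff] using Nat.sub_add_cancel a.pos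
  exact absurd rfl hv

lemma degree_of_blk_eq_two {v : Fin m ⊕ Fin m ⊕ Unit} (hv : blk v = 2) :
    (cliquesPlusUniversal m).degree v = 2 * m := by
  rw [← SimpleGraph.card_neighborFinset_eq_degree, SimpleGraph.neighborFinset_eq_filter]
  rcases v with _ | _ | _ <;>
    simp [blk, cliquesPlusUniversal, Finset.card_filter, Fintype.sum_sum_type, two_mul] at hv ⊢

lemma le_degree (v : Fin m ⊕ Fin m ⊕ Unit) : m ≤ (cliquesPlusUniversal m).degree v := by
  by_cases hv : blk v = 2
  · rw [degree_of_blk_eq_two hv]; omega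
  · rw [degree_of_blk_ne_two hv]

lemma degree_le (v : Fin m ⊕ Fin m ⊕ Unit) : (cliquesPlusUniversal m).degree v ≤ 2 * m := by
  by_cases hv : blk v = 2
  · rw [degree_of_blk_eq_two hv]
  · rw [degree_of_blk_ne_two hv]; omega

lemma eq_of_blk_eq_two {w w' : Fin m ⊕ Fin m ⊕ Unit} (hw : blk w = 2) (hw' : blk w' = 2) :
    w = w' := by
  rcases w with _ | _ | _ <;> rcases w' with _ | _ | _ <;> simp_all [blk]

lemma blk_eq_of_adj {w w' : Fin m ⊕ Fin m ⊕ Unit} (h : (cliquesPlusUniversal m).Adj w w')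
    (hw : blk w ≠ 2) (hw' : blk w' ≠ 2) : blk w = blk w' :=
  h.2.resolve_right (not_or.2 ⟨hw, hw'⟩)

lemma card_le_of_injective_of_blk_eq {α : Type*} [Fintype α] {g : α → Fin m ⊕ Fin m ⊕ Unit}
    (hg : Injective g) {b : Fin 3} (hb : b ≠ 2) (h : ∀ a, blk (g a) = b) :
    Fintype.card α ≤ m := by
  rw [← Finset.card_univ, ← card_filter_blk (m := m) hb]
  exact Finset.card_le_card_of_injOn g (fun a _ => by simp [h a]) hg.injOn

section spider

variable {t : ℕ} {f : Option (Fin 3 × Fin t) → Fin m ⊕ Fin m ⊕ Unit}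

lemma blk_arm_eq_of_avoids
    (hf : ∀ x y, spiderAdj t x y → (cliquesPlusUniversal m).Adj (f x) (f y))
    {j : Fin 3} (hj : ∀ i, blk (f (some (j, i))) ≠ 2) (i : Fin t) :
    blk (f (some (j, i))) = blk (f (some (j, ⟨0, i.pos⟩))) := by
  obtain ⟨n, hn⟩ := i
  induction n with
  | zero => rfl
  | succ n ih =>
    rw [← ih (by omega)]
    have hadj := hf (some (j, ⟨n, by omega⟩)) (some (j, ⟨n + 1, hn⟩)) ⟨rfl, Or.inl rfl⟩
    exact (blk_eq_of_adj hadj (hj _) (hj _)).symm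

lemma exists_ne_arms_avoiding (hinj : Injective f) :
    ∃ j₁ j₂ : Fin 3, j₁ ≠ j₂ ∧
      (∀ i, blk (f (some (j₁, i))) ≠ 2) ∧ ∀ i, blk (f (some (j₂, i))) ≠ 2 := by
  classical
  have hmeet : #{j : Fin 3 | ¬ ∀ i, blk (f (some (j, i))) ≠ 2} ≤ 1 := by
    refine Finset.card_le_one.2 fun j₁ h₁ j₂ h₂ => ?_
    simp only [Finset.mem_filter, Finset.mem_univ, true_and, not_forall, not_not] at h₁ h₂
    obtain ⟨i₁, h₁⟩ := h₁
    obtain ⟨i₂, h₂⟩ := h₂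
    exact congrArg Prod.fst (Option.some_injective _ (hinj (eq_of_blk_eq_two h₁ h₂)))
  have havoid : 1 < #{j : Fin 3 | ∀ i, blk (f (some (j, i))) ≠ 2} := by
    have := Finset.card_filter_add_card_filter_not
      (s := Finset.univ) (fun j : Fin 3 => ∀ i, blk (f (some (j, i))) ≠ 2)
    simp only [Finset.card_univ, Fintype.card_fin] at this
    omega
  obtain ⟨j₁, h₁, j₂, h₂, hne⟩ := Finset.one_lt_card.1 havoid
  simp only [Finset.mem_filter, Finset.mem_univ, true_and] at h₁ h₂
  exact ⟨j₁, j₂, hne, h₁, h₂⟩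

lemma exists_ne_arms_avoiding_blk_eq (hinj : Injective f)
    (hf : ∀ x y, spiderAdj t x y → (cliquesPlusUniversal m).Adj (f x) (f y)) (ht : 0 < t) :
    ∃ j₁ j₂ : Fin 3, j₁ ≠ j₂ ∧ (∀ i, blk (f (some (j₁, i))) ≠ 2) ∧
      (∀ i, blk (f (some (j₂, i))) ≠ 2) ∧
      blk (f (some (j₁, ⟨0, ht⟩))) = blk (f (some (j₂, ⟨0, ht⟩))) := by
  by_cases hc : blk (f none) = 2
  · have havoid : ∀ j i, blk (f (some (j, i))) ≠ 2 := fun j i h =>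
      Option.some_ne_none _ (hinj (eq_of_blk_eq_two h hc))
    have hmaps : ∀ j, blk (f (some (j, ⟨0, ht⟩))) ∈ ({0, 1} : Finset (Fin 3)) := fun j => by
      have := havoid j ⟨0, ht⟩
      simp only [Finset.mem_insert, Finset.mem_singleton]
      omega
    obtain ⟨j₁, -, j₂, -, hne, heq⟩ := Finset.exists_ne_map_eq_of_card_lt_of_maps_to
      (s := Finset.univ) (by simp) fun j _ => hmaps j
    exact ⟨j₁, j₂, hne, havoid j₁, havoid j₂, heq⟩
  · obtain ⟨j₁, j₂, hne, h₁, h₂⟩ := exists_ne_arms_avoiding hinj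
    have hcentre : ∀ j, (∀ i, blk (f (some (j, i))) ≠ 2) →
        blk (f (some (j, ⟨0, ht⟩))) = blk (f none) := fun j hj =>
      (blk_eq_of_adj (hf none (some (j, ⟨0, ht⟩)) rfl) hc (hj _)).symm
    exact ⟨j₁, j₂, hne, h₁, h₂, (hcentre j₁ h₁).trans (hcentre j₂ h₂).symm⟩

theorem not_contains_spider (hm : m < 2 * t) :
    ¬ Contains (spiderAdj t) (cliquesPlusUniversal m).Adj := by
  rintro ⟨f, hinj, hf⟩
  have ht : 0 < t := by omega
  obtain ⟨j₁, j₂, hne, h₁, h₂, hblk⟩ := exists_ne_arms_avoiding_blk_eq hinj hf ht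
  have hinj₂ : Injective (Sum.elim (fun i => f (some (j₁, i))) fun i => f (some (j₂, i))) :=
    Injective.sumElim (fun _ _ h => by simpa using hinj h) (fun _ _ h => by simpa using hinj h)
      fun _ _ h => hne (congrArg Prod.fst (Option.some_injective _ (hinj h)))
  have := card_le_of_injective_of_blk_eq hinj₂ (h₁ ⟨0, ht⟩) <| by
    rintro (i | i)
    · exact blk_arm_eq_of_avoids hf h₁ i
    · exact (blk_arm_eq_of_avoids hf h₂ i).trans hblk.symm
  simp only [Fintype.card_sum, Fintype.card_fin] at this
  omega

end spider

end cliquesPlusUniversal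

/-- **Claim (extremal example, graph version).** For `3 ∣ k`, `k ≥ 6`, the graph
`G` consisting of two cliques of size `2k/3 − 1` plus a universal vertex has
minimum degree `2k/3 − 1`, maximum degree `2(2k/3 − 1) ≥ k`, but contains no
copy of the spider `Sₖ` (centre with three pendant paths of `k/3` edges each). -/
theorem extremal_graph_spider
    (k : ℕ) (hk : 6 ≤ k) (hdvd : 3 ∣ k) :
    ((∀ v, 2 * k / 3 - 1 ≤ (cliquesPlusUniversal (2 * k / 3 - 1)).degree v) ∧
      (∃ v, (cliquesPlusUniversal (2 * k / 3 - 1)).degree v = 2 * k / 3 - 1)) ∧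
    ((∀ v, (cliquesPlusUniversal (2 * k / 3 - 1)).degree v ≤ 2 * (2 * k / 3 - 1)) ∧
      (∃ v, (cliquesPlusUniversal (2 * k / 3 - 1)).degree v = 2 * (2 * k / 3 - 1)) ∧
      k ≤ 2 * (2 * k / 3 - 1)) ∧
    ¬ ∃ f : Option (Fin 3 × Fin (k / 3)) → Fin (2 * k / 3 - 1) ⊕ Fin (2 * k / 3 - 1) ⊕ Unit,
        Function.Injective f ∧
        ∀ x y, spiderAdj (k / 3) x y → (cliquesPlusUniversal (2 * k / 3 - 1)).Adj (f x) (f y) := by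
  obtain ⟨t, rfl⟩ := hdvd
  rw [show 2 * (3 * t) / 3 = 2 * t by omega, show 3 * t / 3 = t by omega]
  open cliquesPlusUniversal in
  exact ⟨⟨le_degree, Sum.inl ⟨0, by omega⟩, degree_of_blk_ne_two (by simp [blk])⟩,
    ⟨degree_le, ⟨Sum.inr (Sum.inr ()), degree_of_blk_eq_two rfl⟩, by omega⟩,
    not_contains_spider (by omega)⟩
end
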